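/- Let N ≥ 3, let μ be a nonzero Radon measure on ℝ^N with support contained in the open half space ℝ^N_+ and finite Newtonian potential, let 1 < k < N-1, and let 0 < p < (N-1)/(k-1). Then for every λ > 0 the problem (1.1) has no positive solution. -/

import Mathlib

open MeasureTheory ENNReal Filter

noncomputable section

/-- The point `(y', t) ∈ ℝ^N` for `y' ∈ ℝ^{N-1}`, `t ∈ ℝ`. -/
def up (N : ℕ) (y' : EuclideanSpace ℝ (Fin (N - 1))) (t : ℝ) : EuclideanSpace ℝ (Fin N) :=
  (WithLp.equiv 2 (Fin N → ℝ)).symm fun i => if h : (i : ℕ) < N - 1 then y' ⟨i, h⟩ else t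

/-- The last coordinate `x_N` of `x ∈ ℝ^N`. -/
def ht (N : ℕ) (x : EuclideanSpace ℝ (Fin N)) : ℝ :=
  if h : N - 1 < N then x ⟨N - 1, h⟩ else 0

/-- Reflection `x̄ = (x', -x_N)` of `x = (x', x_N)` in the hyperplane `x_N = 0`. -/
def reflN (N : ℕ) (x : EuclideanSpace ℝ (Fin N)) : EuclideanSpace ℝ (Fin N) :=
  (WithLp.equiv 2 (Fin N → ℝ)).symm fun i => if (i : ℕ) < N - 1 then x i else -x i

/-- Surface area `σ_N` of the unit sphere in `ℝ^N` (equal to `N` times the unit ball volume). -/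
def sphereArea (N : ℕ) : ℝ :=
  N * (volume (Metric.ball (0 : EuclideanSpace ℝ (Fin N)) 1)).toReal

/-- The open upper half space `ℝ^N_+ = ℝ^{N-1} × (0,∞)`. -/
def upperHalf (N : ℕ) : Set (EuclideanSpace ℝ (Fin N)) := {x | 0 < ht N x}

/-- `H_u(x') = ∫_{ℝ^{N-1}} u(y',0)^p |x'-y'|^{-k} dy'`. -/
def Hu (N : ℕ) (p k : ℝ) (u : EuclideanSpace ℝ (Fin N) → ℝ)
    (x' : EuclideanSpace ℝ (Fin (N - 1))) : ℝ≥0∞ :=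
  ∫⁻ y', ENNReal.ofReal (u (up N y' 0)) ^ p * ENNReal.ofReal ‖x' - y'‖ ^ (-k)

/-- The Newtonian potential `U^ν(x) = (1/((N-2)σ_N)) ∫ |x-y|^{2-N} dν(y)`. -/
def NewtPot (N : ℕ) (ν : Measure (EuclideanSpace ℝ (Fin N)))
    (x : EuclideanSpace ℝ (Fin N)) : ℝ :=
  (((N : ℝ) - 2) * sphereArea N)⁻¹ * (∫⁻ y, ENNReal.ofReal ‖x - y‖ ^ ((2:ℝ) - N) ∂ν).toReal

/-- The Green potential `∫_{ℝ^N_+} G(x,y) dμ(y)` for the Neumann Green function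
`G(x,y) = (|x-y|^{2-N} + |x̄-y|^{2-N})/((N-2)σ_N)` of the half space. -/
def GreenPot (N : ℕ) (μ : Measure (EuclideanSpace ℝ (Fin N)))
    (x : EuclideanSpace ℝ (Fin N)) : ℝ :=
  (((N : ℝ) - 2) * sphereArea N)⁻¹ *
    (∫⁻ y, (ENNReal.ofReal ‖x - y‖ ^ ((2:ℝ) - N)
          + ENNReal.ofReal ‖reflN N x - y‖ ^ ((2:ℝ) - N)) ∂μ).toReal

/-- `μ` is a nonzero Radon (locally finite Borel) measure whose support is contained in the
open upper half space and whose Newtonian potential is finite everywhere. -/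
def AdmissibleMeasure (N : ℕ) (μ : Measure (EuclideanSpace ℝ (Fin N))) : Prop :=
  μ ≠ 0 ∧ IsLocallyFiniteMeasure μ ∧
    (∃ F : Set (EuclideanSpace ℝ (Fin N)), IsClosed F ∧ F ⊆ upperHalf N ∧ μ Fᶜ = 0) ∧
    (∀ x, (∫⁻ y, ENNReal.ofReal ‖x - y‖ ^ ((2:ℝ) - N) ∂μ) < ⊤)

/-- A measurable function `u` is a positive solution of problem (1.1):
(i) `u > 0` a.e. in `ℝ^N_+`, and for a.e. `x' ∈ ℝ^{N-1}`, `u(z) → u(x',0)` as `z → (x',0)`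
with `z ∈ ℝ^N_+`;
(ii) `H_u < ∞` a.e. in `ℝ^{N-1}`, and `∫_{ℝ^{N-1}} H_u(y')|x-(y',0)|^{2-N} dy' < ∞` for
a.e. `x ∈ ℝ^N_+`;
(iii) `u(x) = ∫_{ℝ^N_+} G(x,y) dμ(y)
　　　　+ (2λ/((N-2)σ_N)) ∫∫ u(z',0)^p |x-(y',0)|^{2-N} |y'-z'|^{-k} dz' dy'`
for a.e. `x ∈ ℝ^N_+`. -/
def IsPosSolution (N : ℕ) (p lam k : ℝ) (μ : Measure (EuclideanSpace ℝ (Fin N)))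
    (u : EuclideanSpace ℝ (Fin N) → ℝ) : Prop :=
  Measurable u ∧
  (∀ᵐ x ∂(volume.restrict (upperHalf N)), 0 < u x) ∧
  (∀ᵐ x' ∂(volume : Measure (EuclideanSpace ℝ (Fin (N - 1)))),
    Tendsto u (nhdsWithin (up N x' 0) (upperHalf N)) (nhds (u (up N x' 0)))) ∧
  (∀ᵐ x' ∂(volume : Measure (EuclideanSpace ℝ (Fin (N - 1)))), Hu N p k u x' < ⊤) ∧
  (∀ᵐ x ∂(volume.restrict (upperHalf N)),
    (∫⁻ y', Hu N p k u y' * ENNReal.ofReal ‖x - up N y' 0‖ ^ ((2:ℝ) - N)) < ⊤) ∧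
  (∀ᵐ x ∂(volume.restrict (upperHalf N)),
    ENNReal.ofReal (u x) =
      ENNReal.ofReal (((N : ℝ) - 2) * sphereArea N)⁻¹ *
        (∫⁻ y, (ENNReal.ofReal ‖x - y‖ ^ ((2:ℝ) - N)
              + ENNReal.ofReal ‖reflN N x - y‖ ^ ((2:ℝ) - N)) ∂μ) +
      ENNReal.ofReal (2 * lam / (((N : ℝ) - 2) * sphereArea N)) *
        ∫⁻ y', ENNReal.ofReal ‖x - up N y' 0‖ ^ ((2:ℝ) - N) * Hu N p k u y')

/-- A measurable function `u` is a positive solution of problem (1.1) with `μ ≡ 0`: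
conditions (i), (ii) as above and
(iii) `u(x) = (2λ/((N-2)σ_N)) ∫∫ u(z',0)^p |x-(y',0)|^{2-N} |y'-z'|^{-k} dz' dy'`
for a.e. `x ∈ ℝ^N_+`. -/
def IsPosSolution0 (N : ℕ) (p lam k : ℝ) (u : EuclideanSpace ℝ (Fin N) → ℝ) : Prop :=
  Measurable u ∧
  (∀ᵐ x ∂(volume.restrict (upperHalf N)), 0 < u x) ∧
  (∀ᵐ x' ∂(volume : Measure (EuclideanSpace ℝ (Fin (N - 1)))),
    Tendsto u (nhdsWithin (up N x' 0) (upperHalf N)) (nhds (u (up N x' 0)))) ∧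
  (∀ᵐ x' ∂(volume : Measure (EuclideanSpace ℝ (Fin (N - 1)))), Hu N p k u x' < ⊤) ∧
  (∀ᵐ x ∂(volume.restrict (upperHalf N)),
    (∫⁻ y', Hu N p k u y' * ENNReal.ofReal ‖x - up N y' 0‖ ^ ((2:ℝ) - N)) < ⊤) ∧
  (∀ᵐ x ∂(volume.restrict (upperHalf N)),
    ENNReal.ofReal (u x) =
      ENNReal.ofReal (2 * lam / (((N : ℝ) - 2) * sphereArea N)) *
        ∫⁻ y', ENNReal.ofReal ‖x - up N y' 0‖ ^ ((2:ℝ) - N) * Hu N p k u y')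

/-- The boundary trace `x' ↦ u(x',0)` belongs to `L^q_loc(ℝ^{N-1})`. -/
def BdryLocLp (N : ℕ) (q : ℝ) (u : EuclideanSpace ℝ (Fin N) → ℝ) : Prop :=
  ∀ K : Set (EuclideanSpace ℝ (Fin (N - 1))), IsCompact K →
    MemLp (fun x' => u (up N x' 0)) (ENNReal.ofReal q) (volume.restrict K)



/-!
A positive solution dominates each of its two potentials. Comparing with the Newtonian potential
of `μ`, its boundary trace satisfies `u(x',0) ≳ (1 + |x'|)^(2-N)`, and then
`H_u(y') ≳ (1 + |y'|)^(-k)`. A bound `H_u ≳ (1 + |y'|)^(-B)` forces `B > 1`, since otherwise the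
single-layer potential of `H_u` is infinite, and it gives `u(x',0) ≳ (1 + |x'|)^(-(B-1))`;
conversely `u(x',0) ≳ (1 + |x'|)^(-a)` gives `B = p a + k - (N-1)`. Bounds inside `ℝ^N_+` pass
to the boundary because potentials are lower semicontinuous and `u` is continuous up to the
boundary.
Starting from `a = k - 1` this produces exponents `a ↦ p a - (N - k)` that must all stay positive,
but for `p (k - 1) < N - 1` the starting value lies below the fixed point of this affine map, so
the iterates eventually become negative.
-/

open Set

lemma ENNReal.rpow_le_rpow_of_nonpos {x y : ℝ≥0∞} {e : ℝ} (hxy : x ≤ y) (he : e ≤ 0) :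
    y ^ e ≤ x ^ e := by
  calc y ^ e = (y ^ (-e))⁻¹ := by rw [ENNReal.rpow_neg, inv_inv]
    _ ≤ (x ^ (-e))⁻¹ := ENNReal.inv_le_inv.2 (ENNReal.rpow_le_rpow hxy (neg_nonneg.2 he))
    _ = x ^ e := by rw [ENNReal.rpow_neg, inv_inv]

lemma ENNReal.ofReal_rpow_ne_zero (r : ℝ) {e : ℝ} (he : e ≤ 0) :
    ENNReal.ofReal r ^ e ≠ 0 := by
  simp [ENNReal.rpow_eq_zero_iff, not_lt.2 he]

lemma ENNReal.ofReal_mul_rpow {s t : ℝ} (hs : 0 ≤ s) (e : ℝ) :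
    ENNReal.ofReal (s * t) ^ e = ENNReal.ofReal s ^ e * ENNReal.ofReal t ^ e := by
  rw [ENNReal.ofReal_mul hs, ENNReal.mul_rpow_of_ne_top ENNReal.ofReal_ne_top ENNReal.ofReal_ne_top]

lemma one_add_norm_rpow_mul_le_norm_sub_rpow {F : Type*} [SeminormedAddCommGroup F] (a b : F)
    {K : ℝ} (hK : 0 ≤ K) :
    ENNReal.ofReal (1 + ‖a‖) ^ (-K) * ENNReal.ofReal (1 + ‖b‖) ^ (-K) ≤
      ENNReal.ofReal ‖a - b‖ ^ (-K) := by
  rw [← ENNReal.ofReal_mul_rpow (by positivity)]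
  refine ENNReal.rpow_le_rpow_of_nonpos (ENNReal.ofReal_le_ofReal ?_) (neg_nonpos.2 hK)
  nlinarith [norm_sub_le a b, norm_nonneg a, norm_nonneg b]

section Decay

open Metric

variable {E : Type*} [NormedAddCommGroup E] [MeasurableSpace E] {μ : Measure E}
  {f g : E → ℝ≥0∞} {a b : ℝ}

def DecaysNoFasterThan (μ : Measure E) (f : E → ℝ≥0∞) (a : ℝ) : Prop :=
  ∃ c : ℝ≥0∞, c ≠ 0 ∧ ∀ᵐ x ∂μ, c * ENNReal.ofReal (1 + ‖x‖) ^ (-a) ≤ f x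

lemma decaysNoFasterThan_of_forall {c : ℝ≥0∞} (hc : c ≠ 0)
    (h : ∀ x, c * ENNReal.ofReal (1 + ‖x‖) ^ (-a) ≤ f x) : DecaysNoFasterThan μ f a :=
  ⟨c, hc, ae_of_all _ h⟩

namespace DecaysNoFasterThan

lemma mono (hf : DecaysNoFasterThan μ f a) (hfg : f ≤ᵐ[μ] g) : DecaysNoFasterThan μ g a := by
  obtain ⟨c, hc, h⟩ := hf
  exact ⟨c, hc, by filter_upwards [h, hfg] with x h1 h2 using h1.trans h2⟩

lemma mono_exponent (hf : DecaysNoFasterThan μ f a) (hab : a ≤ b) :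
    DecaysNoFasterThan μ f b := by
  obtain ⟨c, hc, h⟩ := hf
  refine ⟨c, hc, h.mono fun x hx => le_trans ?_ hx⟩
  gcongr
  exact ENNReal.one_le_ofReal.2 (le_add_of_nonneg_right (norm_nonneg x))

lemma const_mul (hf : DecaysNoFasterThan μ f a) {c : ℝ≥0∞} (hc : c ≠ 0) :
    DecaysNoFasterThan μ (fun x => c * f x) a := by
  obtain ⟨c', hc', h⟩ := hf
  refine ⟨c * c', mul_ne_zero hc hc', h.mono fun x hx => ?_⟩
  rw [mul_assoc]
  exact mul_le_mul_right hx c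

lemma mul (hf : DecaysNoFasterThan μ f a) (hg : DecaysNoFasterThan μ g b) :
    DecaysNoFasterThan μ (fun x => f x * g x) (a + b) := by
  obtain ⟨c, hc, hf⟩ := hf
  obtain ⟨c', hc', hg⟩ := hg
  refine ⟨c * c', mul_ne_zero hc hc', ?_⟩
  filter_upwards [hf, hg] with x h1 h2
  have hpos : ENNReal.ofReal (1 + ‖x‖) ≠ 0 := by positivity
  calc c * c' * ENNReal.ofReal (1 + ‖x‖) ^ (-(a + b))
      = (c * ENNReal.ofReal (1 + ‖x‖) ^ (-a)) * (c' * ENNReal.ofReal (1 + ‖x‖) ^ (-b)) := by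
        rw [neg_add, ENNReal.rpow_add _ _ hpos ENNReal.ofReal_ne_top]; ring
    _ ≤ f x * g x := mul_le_mul' h1 h2

lemma rpow (hf : DecaysNoFasterThan μ f a) {p : ℝ} (hp : 0 < p) :
    DecaysNoFasterThan μ (fun x => f x ^ p) (p * a) := by
  obtain ⟨c, hc, h⟩ := hf
  refine ⟨c ^ p, by simp [ENNReal.rpow_eq_zero_iff, hc, hp.not_gt], h.mono fun x hx => ?_⟩
  calc c ^ p * ENNReal.ofReal (1 + ‖x‖) ^ (-(p * a))
      = (c * ENNReal.ofReal (1 + ‖x‖) ^ (-a)) ^ p := by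
        rw [ENNReal.mul_rpow_of_nonneg _ _ hp.le, ← ENNReal.rpow_mul, neg_mul, mul_comm a]
    _ ≤ f x ^ p := ENNReal.rpow_le_rpow hx hp.le

end DecaysNoFasterThan

lemma decaysNoFasterThan_norm_sub_rpow {F : Type*} [SeminormedAddCommGroup F] {φ : E → F}
    (hφ : ∀ y, ‖φ y‖ ≤ ‖y‖) (x : F) {K : ℝ} (hK : 0 ≤ K) :
    DecaysNoFasterThan μ (fun y => ENNReal.ofReal ‖x - φ y‖ ^ (-K)) K := by
  refine decaysNoFasterThan_of_forall
    (ENNReal.ofReal_rpow_ne_zero (1 + ‖x‖) (neg_nonpos.2 hK)) fun y => ?_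
  refine le_trans ?_ (one_add_norm_rpow_mul_le_norm_sub_rpow x (φ y) hK)
  gcongr ENNReal.ofReal (1 + ‖x‖) ^ (-K) * ?_
  exact ENNReal.rpow_le_rpow_of_nonpos (ENNReal.ofReal_le_ofReal (by linarith [hφ y]))
    (neg_nonpos.2 hK)

lemma decaysNoFasterThan_lintegral_norm_sub_rpow {F : Type*} [NormedAddCommGroup F]
    [MeasurableSpace F] [OpensMeasurableSpace F] {ν : Measure F} (hν : ν ≠ 0) {φ : E → F}
    (hφ : ∀ y, ‖φ y‖ ≤ ‖y‖) {K : ℝ} (hK : 0 ≤ K) :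
    DecaysNoFasterThan μ (fun y => ∫⁻ z, ENNReal.ofReal ‖φ y - z‖ ^ (-K) ∂ν) K := by
  obtain ⟨n, hn⟩ := exists_pos_ball (0 : F) hν
  refine decaysNoFasterThan_of_forall (c := ENNReal.ofReal (1 + n) ^ (-K) * ν (ball 0 n))
    (mul_ne_zero (ENNReal.ofReal_rpow_ne_zero _ (neg_nonpos.2 hK)) hn.ne') fun y => ?_
  refine le_trans ?_ (setLIntegral_le_lintegral (ball 0 n) _)
  rw [mul_right_comm, ← setLIntegral_const]
  refine lintegral_mono_ae ?_
  filter_upwards [ae_restrict_mem measurableSet_ball] with z hz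
  rw [mem_ball_zero_iff] at hz
  calc ENNReal.ofReal (1 + n) ^ (-K) * ENNReal.ofReal (1 + ‖y‖) ^ (-K)
      ≤ ENNReal.ofReal (1 + ‖φ y‖) ^ (-K) * ENNReal.ofReal (1 + ‖z‖) ^ (-K) := by
        rw [mul_comm]
        gcongr ?_ * ?_
        · exact ENNReal.rpow_le_rpow_of_nonpos (ENNReal.ofReal_le_ofReal (by linarith [hφ y]))
            (neg_nonpos.2 hK)
        · exact ENNReal.rpow_le_rpow_of_nonpos (ENNReal.ofReal_le_ofReal (by linarith))
            (neg_nonpos.2 hK)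
    _ ≤ ENNReal.ofReal ‖φ y - z‖ ^ (-K) := one_add_norm_rpow_mul_le_norm_sub_rpow _ _ hK

end Decay

section RieszPotential

open Metric

variable {E : Type*} [NormedAddCommGroup E] [MeasurableSpace E] {μ : Measure E}
  {f : E → ℝ≥0∞} {A K : ℝ}

def rieszPot (μ : Measure E) (K : ℝ) (f : E → ℝ≥0∞) (y : E) : ℝ≥0∞ :=
  ∫⁻ z, f z * ENNReal.ofReal ‖y - z‖ ^ (-K) ∂μ

lemma le_rieszPot_of_forall_mem_ball [OpensMeasurableSpace E] {c : ℝ≥0∞}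
    (hf : ∀ᵐ z ∂μ, c * ENNReal.ofReal (1 + ‖z‖) ^ (-A) ≤ f z) (hA : 0 ≤ A) (hK : 0 ≤ K)
    (y : E) {r Rw Rk : ℝ} (hw : ∀ z ∈ ball (0 : E) r, 1 + ‖z‖ ≤ Rw)
    (hk : ∀ z ∈ ball (0 : E) r, ‖y - z‖ ≤ Rk) :
    c * ENNReal.ofReal Rw ^ (-A) * ENNReal.ofReal Rk ^ (-K) * μ (ball 0 r) ≤
      rieszPot μ K f y := by
  refine le_trans ?_ (setLIntegral_le_lintegral (ball 0 r) _)
  rw [← setLIntegral_const]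
  refine lintegral_mono_ae ?_
  filter_upwards [ae_restrict_of_ae hf, ae_restrict_mem measurableSet_ball] with z hfz hz
  calc c * ENNReal.ofReal Rw ^ (-A) * ENNReal.ofReal Rk ^ (-K)
      ≤ c * ENNReal.ofReal (1 + ‖z‖) ^ (-A) * ENNReal.ofReal ‖y - z‖ ^ (-K) := by
        gcongr c * ?_ * ?_
        · exact ENNReal.rpow_le_rpow_of_nonpos (ENNReal.ofReal_le_ofReal (hw z hz))
            (neg_nonpos.2 hA)
        · exact ENNReal.rpow_le_rpow_of_nonpos (ENNReal.ofReal_le_ofReal (hk z hz))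
            (neg_nonpos.2 hK)
    _ ≤ f z * ENNReal.ofReal ‖y - z‖ ^ (-K) := by gcongr

lemma DecaysNoFasterThan.rieszPot_kernel [OpensMeasurableSpace E] [μ.IsOpenPosMeasure]
    (hf : DecaysNoFasterThan μ f A) (hA : 0 ≤ A) (hK : 0 ≤ K) :
    DecaysNoFasterThan μ (rieszPot μ K f) K := by
  obtain ⟨c, hc, hf⟩ := hf
  refine decaysNoFasterThan_of_forall (c := c * ENNReal.ofReal 2 ^ (-A) * μ (ball 0 1))
    (mul_ne_zero (mul_ne_zero hc (ENNReal.ofReal_rpow_ne_zero _ (by linarith)))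
      (measure_ball_pos μ 0 one_pos).ne') fun y => ?_
  have key := le_rieszPot_of_forall_mem_ball hf hA hK y (r := 1) (Rw := 2) (Rk := 1 + ‖y‖)
    (fun z hz => by rw [mem_ball_zero_iff] at hz; linarith)
    (fun z hz => by rw [mem_ball_zero_iff] at hz; linarith [norm_sub_le y z])
  exact le_of_eq_of_le (by ring) key

/-- Integrating over the ball of radius `2 (1 + ‖y‖)`, where both factors are comparable to
their values at scale `1 + ‖y‖`. -/
lemma DecaysNoFasterThan.rieszPot [NormedSpace ℝ E] [BorelSpace E] [FiniteDimensional ℝ E]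
    [Nontrivial E] [μ.IsAddHaarMeasure] (hf : DecaysNoFasterThan μ f A) (hA : 0 ≤ A)
    (hK : 0 ≤ K) : DecaysNoFasterThan μ (rieszPot μ K f) (A + K - Module.finrank ℝ E) := by
  obtain ⟨c, hc, hf⟩ := hf
  set d := Module.finrank ℝ E
  refine decaysNoFasterThan_of_forall
    (c := c * ENNReal.ofReal 3 ^ (-(A + K)) * ENNReal.ofReal 2 ^ d * μ (ball 0 1)) ?_ fun y => ?_
  · exact mul_ne_zero (mul_ne_zero (mul_ne_zero hc (ENNReal.ofReal_rpow_ne_zero _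
      (by linarith))) (pow_ne_zero _ (by simp))) (measure_ball_pos μ 0 one_pos).ne'
  set ρ := 1 + ‖y‖
  have hρ : 1 ≤ ρ := le_add_of_nonneg_right (norm_nonneg y)
  have key := le_rieszPot_of_forall_mem_ball hf hA hK y (r := 2 * ρ) (Rw := 3 * ρ) (Rk := 3 * ρ)
    (fun z hz => by rw [mem_ball_zero_iff] at hz; linarith)
    (fun z hz => by rw [mem_ball_zero_iff] at hz; linarith [norm_sub_le y z])
  rw [Measure.addHaar_ball _ _ (by positivity), ENNReal.ofReal_mul_rpow (by norm_num),
    ENNReal.ofReal_mul_rpow (by norm_num), ENNReal.ofReal_pow (by positivity),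
    ENNReal.ofReal_mul (by norm_num), mul_pow] at key
  refine le_trans (le_of_eq ?_) key
  have hρ0 : ENNReal.ofReal ρ ≠ 0 := (ENNReal.ofReal_pos.2 (by linarith)).ne'
  rw [show -(A + K - d) = -A + -K + (d : ℝ) by ring, neg_add,
    ENNReal.rpow_add _ _ hρ0 ENNReal.ofReal_ne_top,
    ENNReal.rpow_add _ _ hρ0 ENNReal.ofReal_ne_top,
    ENNReal.rpow_add _ _ (by simp) ENNReal.ofReal_ne_top, ENNReal.rpow_natCast]
  ring

/-- In polar coordinates this is `∫₀^∞ r^(d-1) (1 + r)^(-d) dr`, which diverges like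
`∫^∞ dr / r`. -/
lemma lintegral_one_add_norm_rpow_neg_finrank_eq_top [NormedSpace ℝ E] [BorelSpace E]
    [FiniteDimensional ℝ E] [Nontrivial E] (μ : Measure E) [μ.IsAddHaarMeasure] :
    ∫⁻ x, ENNReal.ofReal (1 + ‖x‖) ^ (-(Module.finrank ℝ E : ℝ)) ∂μ = ⊤ := by
  set d := Module.finrank ℝ E
  obtain ⟨m, hm⟩ : ∃ m, d = m + 1 := ⟨d - 1, (Nat.sub_add_cancel Module.finrank_pos).symm⟩
  by_contra h
  have hint : Integrable (fun x : E => (1 + ‖x‖) ^ (-(d : ℝ))) μ := by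
    refine ⟨(Continuous.rpow_const (by fun_prop) fun x =>
      Or.inl (by positivity)).aestronglyMeasurable,
      (hasFiniteIntegral_iff_ofReal (ae_of_all _ fun x => by positivity)).2 ?_⟩
    have hofReal : ∀ x : E, ENNReal.ofReal ((1 + ‖x‖) ^ (-(d : ℝ))) =
        ENNReal.ofReal (1 + ‖x‖) ^ (-(d : ℝ)) := fun x =>
      (ENNReal.ofReal_rpow_of_pos (by positivity)).symm
    simp_rw [hofReal]
    exact lt_top_iff_ne_top.2 h
  have hpolar :=
    (integrable_fun_norm_addHaar μ (f := fun t : ℝ => (1 + t) ^ (-(d : ℝ)))).1 hint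
  have hinv : IntegrableOn (fun y : ℝ => y ^ (-1 : ℝ)) (Ioi 1) := by
    refine ((hpolar.mono_set (Ioi_subset_Ioi zero_le_one)).const_mul (2 ^ d)).mono'
      (by fun_prop) ?_
    filter_upwards [ae_restrict_mem measurableSet_Ioi] with y (hy : 1 < y)
    have h2y : (2 * y) ^ (-(d : ℝ)) ≤ (1 + y) ^ (-(d : ℝ)) :=
      Real.rpow_le_rpow_of_nonpos (by positivity) (by linarith) (by simp)
    calc ‖y ^ (-1 : ℝ)‖ = 2 ^ d * (y ^ (d - 1) * (2 * y) ^ (-(d : ℝ))) := by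
          rw [Real.norm_of_nonneg (by positivity), Real.rpow_neg_one,
            Real.rpow_neg (by positivity), Real.rpow_natCast, mul_pow, hm, Nat.add_sub_cancel]
          field_simp
          ring
      _ ≤ 2 ^ d * (y ^ (d - 1) • (1 + y) ^ (-(d : ℝ))) := by rw [smul_eq_mul]; gcongr
  have := (integrableOn_Ioi_rpow_iff zero_lt_one).1 hinv
  norm_num at this

lemma DecaysNoFasterThan.lintegral_eq_top [NormedSpace ℝ E] [BorelSpace E]
    [FiniteDimensional ℝ E] [Nontrivial E] [μ.IsAddHaarMeasure] (hf : DecaysNoFasterThan μ f A)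
    (hA : A ≤ Module.finrank ℝ E) : ∫⁻ x, f x ∂μ = ⊤ := by
  obtain ⟨c, hc, h⟩ := hf.mono_exponent hA
  refine eq_top_mono (lintegral_mono_ae h) ?_
  rw [lintegral_const_mul c (by fun_prop), lintegral_one_add_norm_rpow_neg_finrank_eq_top,
    ENNReal.mul_top hc]

end RieszPotential

section BoundaryValues

open Filter Topology

lemma lowerSemicontinuous_lintegral {X β : Type*} [TopologicalSpace X] [FirstCountableTopology X]
    [MeasurableSpace β] (ν : Measure β) {κ : X → β → ℝ≥0∞}
    (hκ : ∀ b, LowerSemicontinuous fun x => κ x b) (hmeas : ∀ x, Measurable (κ x)) :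
    LowerSemicontinuous fun x => ∫⁻ b, κ x b ∂ν :=
  lowerSemicontinuous_iff_le_liminf.2 fun x =>
    (lintegral_mono fun b => (hκ b).le_liminf x).trans (lintegral_liminf_le hmeas)

lemma ENNReal.lowerSemicontinuous_const_mul {X : Type*} [TopologicalSpace X] {f : X → ℝ≥0∞}
    (hf : LowerSemicontinuous f) {c : ℝ≥0∞} (hc : c ≠ ⊤) :
    LowerSemicontinuous fun x => c * f x :=
  (ENNReal.continuous_const_mul hc).comp_lowerSemicontinuous hf fun _ _ h => mul_le_mul_right h c

variable {X : Type*} [TopologicalSpace X] [MeasurableSpace X] [OpensMeasurableSpace X]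
  {μ : Measure X} [μ.IsOpenPosMeasure] {U : Set X} {x₀ : X}

lemma frequently_nhdsWithin_of_ae_restrict (hU : IsOpen U) (hx₀ : x₀ ∈ closure U)
    {P : X → Prop} (h : ∀ᵐ x ∂μ.restrict U, P x) : ∃ᶠ x in 𝓝[U] x₀, P x := by
  intro hnot
  rw [eventually_nhdsWithin_iff, eventually_nhds_iff] at hnot
  obtain ⟨V, hVP, hV, hx₀V⟩ := hnot
  rw [ae_restrict_iff' hU.measurableSet] at h
  have hnull : μ (V ∩ U) = 0 :=
    measure_eq_zero_iff_ae_notMem.2 (h.mono fun x hx hxVU => hVP x hxVU.1 hxVU.2 (hx hxVU.2))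
  exact ((hV.inter hU).measure_pos μ (mem_closure_iff.1 hx₀ V hV hx₀V)).ne' hnull

lemma LowerSemicontinuous.le_of_ae_restrict_le {F G : X → ℝ≥0∞} (hF : LowerSemicontinuous F)
    (hU : IsOpen U) (hFG : ∀ᵐ x ∂μ.restrict U, F x ≤ G x) (hx₀ : x₀ ∈ closure U)
    (hG : Tendsto G (𝓝[U] x₀) (𝓝 (G x₀))) : F x₀ ≤ G x₀ := by
  by_contra! hlt
  obtain ⟨t, hGt, htF⟩ := exists_between hlt
  obtain ⟨x, ⟨hFGx, hGtx⟩, htFx⟩ :=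
    (((frequently_nhdsWithin_of_ae_restrict hU hx₀ hFG).and_eventually
      (hG (Iio_mem_nhds hGt))).and_eventually (nhdsWithin_le_nhds (hF x₀ t htF))).exists
  exact lt_irrefl _ ((hFGx.trans_lt hGtx).trans htFx)

end BoundaryValues

section HalfSpace

open Metric

variable {N : ℕ}

lemma up_apply (y' : EuclideanSpace ℝ (Fin (N - 1))) (t : ℝ) (i : Fin N) :
    up N y' t i = if h : (i : ℕ) < N - 1 then y' ⟨i, h⟩ else t := rfl

lemma ht_up (hN : 1 ≤ N) (y' : EuclideanSpace ℝ (Fin (N - 1))) (t : ℝ) :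
    ht N (up N y' t) = t := by
  simp [ht, show N - 1 < N by omega, up_apply]

lemma norm_up_sub_up (hN : 1 ≤ N) (x' y' : EuclideanSpace ℝ (Fin (N - 1))) (t s : ℝ) :
    ‖up N x' t - up N y' s‖ = Real.sqrt (‖x' - y'‖ ^ 2 + (t - s) ^ 2) := by
  obtain ⟨M, rfl⟩ : ∃ M, N = M + 1 := ⟨N - 1, by omega⟩
  rw [EuclideanSpace.norm_eq, EuclideanSpace.norm_eq,
    Real.sq_sqrt (Finset.sum_nonneg fun i _ => sq_nonneg _), Fin.sum_univ_castSucc]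
  congr 2
  · refine Finset.sum_congr rfl fun i _ => ?_
    have hi : ((i.castSucc : Fin (M + 1)) : ℕ) < M + 1 - 1 := by simp
    simp only [PiLp.sub_apply, up_apply, dif_pos hi]
    rfl
  · simp [up_apply, Real.norm_eq_abs, sq_abs]

lemma norm_up_zero_sub_up_zero (hN : 1 ≤ N) (x' y' : EuclideanSpace ℝ (Fin (N - 1))) :
    ‖up N x' 0 - up N y' 0‖ = ‖x' - y'‖ := by
  simp [norm_up_sub_up hN]

lemma norm_up_zero (hN : 1 ≤ N) (x' : EuclideanSpace ℝ (Fin (N - 1))) :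
    ‖up N x' 0‖ = ‖x'‖ := by
  have h0 : up N 0 0 = 0 := by
    ext i
    simp only [up_apply]
    split <;> rfl
  simpa [h0] using norm_up_zero_sub_up_zero hN x' 0

lemma isometry_up_zero (hN : 1 ≤ N) :
    Isometry fun y' : EuclideanSpace ℝ (Fin (N - 1)) => up N y' 0 :=
  Isometry.of_dist_eq fun x' y' => by simp only [dist_eq_norm, norm_up_zero_sub_up_zero hN]

lemma isOpen_upperHalf : IsOpen (upperHalf N) := by
  by_cases h : N - 1 < N
  · have : upperHalf N =
        (fun x : EuclideanSpace ℝ (Fin N) => x ⟨N - 1, h⟩) ⁻¹' Ioi 0 := by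
      ext x; simp [upperHalf, ht, h]
    rw [this]
    exact isOpen_Ioi.preimage ((continuous_apply _).comp (PiLp.continuous_ofLp 2 _))
  · simp [upperHalf, ht, h]

lemma up_mem_upperHalf (hN : 1 ≤ N) (y' : EuclideanSpace ℝ (Fin (N - 1))) {t : ℝ}
    (htpos : 0 < t) :
    up N y' t ∈ upperHalf N := by
  show 0 < ht N (up N y' t)
  rwa [ht_up hN]

lemma up_zero_mem_closure_upperHalf (hN : 1 ≤ N) (x' : EuclideanSpace ℝ (Fin (N - 1))) :
    up N x' 0 ∈ closure (upperHalf N) := by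
  refine Metric.mem_closure_iff.2 fun ε hε =>
    ⟨up N x' (ε / 2), up_mem_upperHalf hN x' (by positivity), ?_⟩
  rw [dist_eq_norm, norm_up_sub_up hN]
  simp [Real.sqrt_sq_eq_abs, abs_of_pos (half_pos hε), hε]

lemma finrank_euclideanSpace_fin_sub_one (hN : 1 ≤ N) :
    (Module.finrank ℝ (EuclideanSpace ℝ (Fin (N - 1))) : ℝ) = N - 1 := by
  rw [finrank_euclideanSpace_fin, Nat.cast_sub hN, Nat.cast_one]

end HalfSpace

section SingleLayer

variable {N : ℕ} {W : EuclideanSpace ℝ (Fin (N - 1)) → ℝ≥0∞}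

def singleLayer (N : ℕ) (W : EuclideanSpace ℝ (Fin (N - 1)) → ℝ≥0∞)
    (x : EuclideanSpace ℝ (Fin N)) : ℝ≥0∞ :=
  ∫⁻ y', ENNReal.ofReal ‖x - up N y' 0‖ ^ ((2 : ℝ) - N) * W y'

lemma singleLayer_up_zero (hN : 1 ≤ N) (x' : EuclideanSpace ℝ (Fin (N - 1))) :
    singleLayer N W (up N x' 0) = rieszPot volume ((N : ℝ) - 2) W x' := by
  simp only [singleLayer, rieszPot]
  refine lintegral_congr fun y' => ?_
  rw [norm_up_zero_sub_up_zero hN, neg_sub, mul_comm]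

lemma continuous_ofReal_norm_sub_rpow {F : Type*} [SeminormedAddCommGroup F] (y : F) (e : ℝ) :
    Continuous fun x : F => ENNReal.ofReal ‖x - y‖ ^ e :=
  ENNReal.continuous_rpow_const.comp
    (ENNReal.continuous_ofReal.comp (continuous_id.sub continuous_const).norm)

lemma lowerSemicontinuous_singleLayer (hN : 2 ≤ N) (hW : Measurable W) :
    LowerSemicontinuous (singleLayer N W) := by
  have he : (2 : ℝ) - N ≤ 0 := by
    have : (2 : ℝ) ≤ N := by exact_mod_cast hN
    linarith
  unfold singleLayer
  refine lowerSemicontinuous_lintegral _ (fun y' => Continuous.lowerSemicontinuous ?_) fun x => ?_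
  · refine continuous_iff_continuousAt.2 fun x => ?_
    have hmul : ContinuousAt (fun t => t * W y')
        (ENNReal.ofReal ‖x - up N y' 0‖ ^ ((2 : ℝ) - N)) :=
      ENNReal.continuousAt_mul_const (Or.inr (ENNReal.ofReal_rpow_ne_zero _ he))
    exact ContinuousAt.comp (f := fun x => ENNReal.ofReal ‖x - up N y' 0‖ ^ ((2 : ℝ) - N))
      hmul (continuous_ofReal_norm_sub_rpow (up N y' 0) _).continuousAt
  · have hup := (isometry_up_zero (N := N) (by omega)).continuous
    exact ((ENNReal.continuous_rpow_const.comp (ENNReal.continuous_ofReal.comp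
      (continuous_const.sub hup).norm)).measurable).mul hW

/-- The integrand decays no faster than `|y'|^{-(N-1)}`, which is not integrable on `ℝ^{N-1}`. -/
lemma singleLayer_eq_top (hN : 2 ≤ N) (hW : DecaysNoFasterThan volume W 1)
    (x : EuclideanSpace ℝ (Fin N)) : singleLayer N W x = ⊤ := by
  have : Nonempty (Fin (N - 1)) := ⟨⟨0, by omega⟩⟩
  have hker := decaysNoFasterThan_norm_sub_rpow (μ := volume) (fun y' => (norm_up_zero
    (N := N) (by omega) y').le) x (K := (N : ℝ) - 2) (by
      have : (2 : ℝ) ≤ N := by exact_mod_cast hN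
      linarith)
  rw [singleLayer, ← neg_sub]
  refine (hker.mul hW).lintegral_eq_top ?_
  rw [finrank_euclideanSpace_fin_sub_one (by omega)]
  linarith

end SingleLayer

lemma exists_iterate_neg {p δ a : ℝ} (hδ : 0 < δ) (h : (p - 1) * a < δ) :
    ∃ n, (fun x => p * x - δ)^[n] a < 0 := by
  by_contra! hpos
  set g := fun n => (fun x => p * x - δ)^[n] a
  have hg : ∀ n, g (n + 1) = p * g n - δ := fun n => Function.iterate_succ_apply' _ n a
  rcases le_or_gt p 1 with hp | hp
  · have hdec : ∀ n : ℕ, g n ≤ a - n * δ := by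
      intro n
      induction n with
      | zero => simp [g]
      | succ n ih =>
        rw [hg, Nat.cast_succ]
        nlinarith [hpos n]
    obtain ⟨n, hn⟩ := exists_nat_gt (a / δ)
    rw [div_lt_iff₀ hδ] at hn
    linarith [hdec n, hpos n]
  · -- `a` lies strictly below the repelling fixed point `δ / (p - 1)`.
    set a₀ := δ / (p - 1)
    have hfix : p * a₀ - δ = a₀ := by
      simp only [a₀]
      field_simp
      ring
    have hgap : 0 < a₀ - a := by
      rw [sub_pos, lt_div_iff₀ (by linarith)]
      linarith
    have hgeo : ∀ n : ℕ, a₀ - g n = p ^ n * (a₀ - a) := by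
      intro n
      induction n with
      | zero => simp [g]
      | succ n ih =>
        rw [hg, pow_succ]
        nlinarith
    obtain ⟨n, hn⟩ := pow_unbounded_of_one_lt (a₀ / (a₀ - a)) hp
    rw [div_lt_iff₀ hgap] at hn
    linarith [hgeo n, hpos n]

section Solution

variable {N : ℕ} {p lam k : ℝ} {μ : Measure (EuclideanSpace ℝ (Fin N))}
  {u : EuclideanSpace ℝ (Fin N) → ℝ} {a B : ℝ}

def boundaryTrace (N : ℕ) (u : EuclideanSpace ℝ (Fin N) → ℝ)
    (x' : EuclideanSpace ℝ (Fin (N - 1))) : ℝ≥0∞ :=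
  ENNReal.ofReal (u (up N x' 0))

lemma decaysNoFasterThan_Hu (hN : 2 ≤ N) (hp : 0 < p) (hk : 0 ≤ k) (ha : 0 ≤ a)
    (h : DecaysNoFasterThan volume (boundaryTrace N u) a) :
    DecaysNoFasterThan volume (Hu N p k u) (p * a + k - ((N : ℝ) - 1)) := by
  have : Nonempty (Fin (N - 1)) := ⟨⟨0, by omega⟩⟩
  have := (h.rpow hp).rieszPot (mul_nonneg hp.le ha) hk
  rwa [finrank_euclideanSpace_fin_sub_one (by omega)] at this

lemma decaysNoFasterThan_Hu_kernel (hp : 0 < p) (hk : 0 ≤ k) (ha : 0 ≤ a)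
    (h : DecaysNoFasterThan volume (boundaryTrace N u) a) :
    DecaysNoFasterThan volume (Hu N p k u) k :=
  (h.rpow hp).rieszPot_kernel (mul_nonneg hp.le ha) hk

lemma sub_two_mul_sphereArea_pos (hN : 3 ≤ N) : 0 < ((N : ℝ) - 2) * sphereArea N := by
  have hN' : (3 : ℝ) ≤ N := by exact_mod_cast hN
  refine mul_pos (by linarith) (mul_pos (by linarith) (ENNReal.toReal_pos ?_ ?_))
  · exact (Metric.measure_ball_pos volume _ one_pos).ne'
  · exact measure_ball_lt_top.ne

namespace IsPosSolution

lemma newtonPotential_le (hu : IsPosSolution N p lam k μ u) :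
    ∀ᵐ x ∂volume.restrict (upperHalf N),
      ENNReal.ofReal (((N : ℝ) - 2) * sphereArea N)⁻¹ *
        ∫⁻ y, ENNReal.ofReal ‖x - y‖ ^ ((2 : ℝ) - N) ∂μ ≤ ENNReal.ofReal (u x) := by
  filter_upwards [hu.2.2.2.2.2] with x hx
  rw [hx]
  exact le_add_right (mul_le_mul_right (lintegral_mono fun y => le_self_add) _)

lemma singleLayer_le (hu : IsPosSolution N p lam k μ u) :
    ∀ᵐ x ∂volume.restrict (upperHalf N),
      ENNReal.ofReal (2 * lam / (((N : ℝ) - 2) * sphereArea N)) * singleLayer N (Hu N p k u) x ≤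
        ENNReal.ofReal (u x) := by
  filter_upwards [hu.2.2.2.2.2] with x hx
  rw [hx]
  exact le_add_self

lemma ae_le_boundaryTrace (hu : IsPosSolution N p lam k μ u) (hN : 1 ≤ N)
    {F : EuclideanSpace ℝ (Fin N) → ℝ≥0∞} (hF : LowerSemicontinuous F)
    (h : ∀ᵐ x ∂volume.restrict (upperHalf N), F x ≤ ENNReal.ofReal (u x)) :
    ∀ᵐ x', F (up N x' 0) ≤ boundaryTrace N u x' := by
  filter_upwards [hu.2.2.1] with x' hx'
  exact hF.le_of_ae_restrict_le isOpen_upperHalf h (up_zero_mem_closure_upperHalf hN x')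
    ((ENNReal.continuous_ofReal.tendsto _).comp hx')

lemma decaysNoFasterThan_boundaryTrace (hu : IsPosSolution N p lam k μ u) (hN : 3 ≤ N)
    (hμ : μ ≠ 0) : DecaysNoFasterThan volume (boundaryTrace N u) ((N : ℝ) - 2) := by
  have hc : ENNReal.ofReal (((N : ℝ) - 2) * sphereArea N)⁻¹ ≠ 0 :=
    (ENNReal.ofReal_pos.2 (inv_pos.2 (sub_two_mul_sphereArea_pos hN))).ne'
  have hF : LowerSemicontinuous fun x => ENNReal.ofReal (((N : ℝ) - 2) * sphereArea N)⁻¹ *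
      ∫⁻ y, ENNReal.ofReal ‖x - y‖ ^ ((2 : ℝ) - N) ∂μ :=
    ENNReal.lowerSemicontinuous_const_mul (lowerSemicontinuous_lintegral μ
      (fun y => (continuous_ofReal_norm_sub_rpow y _).lowerSemicontinuous)
      fun x => by fun_prop) ENNReal.ofReal_ne_top
  have hnewton := decaysNoFasterThan_lintegral_norm_sub_rpow (μ := volume) hμ
    (fun x' => (norm_up_zero (N := N) (by omega) x').le) (K := (N : ℝ) - 2) (by
      have : (3 : ℝ) ≤ N := by exact_mod_cast hN
      linarith)
  refine (hnewton.const_mul hc).mono ?_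
  filter_upwards [hu.ae_le_boundaryTrace (by omega) hF hu.newtonPotential_le] with x' hx'
  rwa [neg_sub]

lemma one_lt_of_decaysNoFasterThan_Hu (hu : IsPosSolution N p lam k μ u) (hN : 3 ≤ N)
    (hlam : 0 < lam) (hB : DecaysNoFasterThan volume (Hu N p k u) B) : 1 < B := by
  by_contra! hB1
  have hc : ENNReal.ofReal (2 * lam / (((N : ℝ) - 2) * sphereArea N)) ≠ 0 :=
    (ENNReal.ofReal_pos.2 (div_pos (by linarith) (sub_two_mul_sphereArea_pos hN))).ne'
  have : (ae (volume.restrict (upperHalf N))).NeBot := by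
    rw [ae_neBot, Ne, Measure.restrict_eq_zero]
    exact (isOpen_upperHalf.measure_pos volume
      ⟨_, up_mem_upperHalf (N := N) (by omega) 0 one_pos⟩).ne'
  obtain ⟨x, hx⟩ := hu.singleLayer_le.exists
  rw [singleLayer_eq_top (by omega) (hB.mono_exponent hB1), ENNReal.mul_top hc] at hx
  exact ENNReal.ofReal_ne_top (top_le_iff.1 hx)

lemma decaysNoFasterThan_boundaryTrace_of_Hu (hu : IsPosSolution N p lam k μ u) (hN : 3 ≤ N)
    (hlam : 0 < lam) (hB0 : 0 ≤ B) (hB : DecaysNoFasterThan volume (Hu N p k u) B) :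
    DecaysNoFasterThan volume (boundaryTrace N u) (B - 1) := by
  have : Nonempty (Fin (N - 1)) := ⟨⟨0, by omega⟩⟩
  obtain ⟨c, hc, hHu⟩ := hB
  set W := fun y' : EuclideanSpace ℝ (Fin (N - 1)) => c * ENNReal.ofReal (1 + ‖y'‖) ^ (-B)
  have hclam : ENNReal.ofReal (2 * lam / (((N : ℝ) - 2) * sphereArea N)) ≠ 0 :=
    (ENNReal.ofReal_pos.2 (div_pos (by linarith) (sub_two_mul_sphereArea_pos hN))).ne'
  have hF : LowerSemicontinuous fun x =>
      ENNReal.ofReal (2 * lam / (((N : ℝ) - 2) * sphereArea N)) * singleLayer N W x :=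
    ENNReal.lowerSemicontinuous_const_mul (lowerSemicontinuous_singleLayer (by omega)
      (by fun_prop)) ENNReal.ofReal_ne_top
  have hle : ∀ᵐ x ∂volume.restrict (upperHalf N),
      ENNReal.ofReal (2 * lam / (((N : ℝ) - 2) * sphereArea N)) * singleLayer N W x ≤
        ENNReal.ofReal (u x) := by
    filter_upwards [hu.singleLayer_le] with x hx
    refine le_trans (mul_le_mul_right (lintegral_mono_ae ?_) _) hx
    filter_upwards [hHu] with y' hy'
    exact mul_le_mul_right hy' _
  have hW : DecaysNoFasterThan volume W B := decaysNoFasterThan_of_forall hc fun _ => le_rfl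
  have hpot := (hW.rieszPot hB0 (K := (N : ℝ) - 2) (by
    have : (3 : ℝ) ≤ N := by exact_mod_cast hN
    linarith)).const_mul hclam
  rw [finrank_euclideanSpace_fin_sub_one (by omega),
    show B + ((N : ℝ) - 2) - ((N : ℝ) - 1) = B - 1 by ring] at hpot
  refine hpot.mono ?_
  filter_upwards [hu.ae_le_boundaryTrace (by omega) hF hle] with x' hx'
  rwa [singleLayer_up_zero (by omega)] at hx'

lemma decaysNoFasterThan_boundaryTrace_step (hu : IsPosSolution N p lam k μ u) (hN : 3 ≤ N)
    (hlam : 0 < lam) (hp : 0 < p) (hk : 0 ≤ k) (ha : 0 ≤ a)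
    (h : DecaysNoFasterThan volume (boundaryTrace N u) a) :
    0 < p * a - ((N : ℝ) - k) ∧
      DecaysNoFasterThan volume (boundaryTrace N u) (p * a - ((N : ℝ) - k)) := by
  have hHu := decaysNoFasterThan_Hu (by omega) hp hk ha h
  have hB := hu.one_lt_of_decaysNoFasterThan_Hu hN hlam hHu
  refine ⟨by linarith, ?_⟩
  convert hu.decaysNoFasterThan_boundaryTrace_of_Hu hN hlam (by linarith) hHu using 1
  ring

end IsPosSolution

end Solution

/-- Theorem 1.1(i2): if `1 < k < N-1` and `0 < p < (N-1)/(k-1)` then, for every `λ > 0`,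
problem (1.1) with a nonzero admissible measure `μ` has no positive solution. -/
theorem no_solution_mu_ne_zero_subcritical
    (N : ℕ) (hN : 3 ≤ N)
    (μ : Measure (EuclideanSpace ℝ (Fin N))) (hμ : AdmissibleMeasure N μ)
    (k p lam : ℝ) (hk1 : 1 < k) (hkN : k < (N : ℝ) - 1)
    (hp0 : 0 < p) (hp : p < ((N : ℝ) - 1) / (k - 1)) (hlam : 0 < lam) :
    ¬ ∃ u : EuclideanSpace ℝ (Fin N) → ℝ, IsPosSolution N p lam k μ u := by
  rintro ⟨u, hu⟩
  have hinit : DecaysNoFasterThan volume (boundaryTrace N u) (k - 1) :=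
    hu.decaysNoFasterThan_boundaryTrace_of_Hu hN hlam (by linarith)
      (decaysNoFasterThan_Hu_kernel hp0 (by linarith) (by linarith)
        (hu.decaysNoFasterThan_boundaryTrace hN hμ.1))
  have hiter : ∀ n, 0 < (fun a => p * a - ((N : ℝ) - k))^[n] (k - 1) ∧
      DecaysNoFasterThan volume (boundaryTrace N u)
        ((fun a => p * a - ((N : ℝ) - k))^[n] (k - 1)) := by
    intro n
    induction n with
    | zero => exact ⟨sub_pos.2 hk1, hinit⟩
    | succ n ih =>
      rw [Function.iterate_succ_apply']
      exact hu.decaysNoFasterThan_boundaryTrace_step hN hlam hp0 (by linarith) ih.1.le ih.2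
  have hsub : (p - 1) * (k - 1) < (N : ℝ) - k := by
    have := (lt_div_iff₀ (sub_pos.2 hk1)).1 hp
    linarith
  obtain ⟨n, hn⟩ := exists_iterate_neg (by linarith) hsub
  exact hn.not_gt (hiter n).1
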